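/- Let Φ : ℝ^N → ℝ satisfy (λ|A| − 1)₊ ≤ Φ(A) ≤ Λ|A| + 1 for all A ∈ ℝ^N, where 0 < λ ≤ Λ. Assume Φ is differentiable on ℝ^N with q := ∇Φ, and that the convexification Φ** is differentiable on ℝ^N. Then for all A₁, A₂ in the contact set B := {A ∈ ℝ^N : Φ**(A) = Φ(A)} one has (q(A₁) − q(A₂)) · (A₁ − A₂) ≥ 0. -/

import Mathlib

/-- The convex envelope (convexification) `Φ**` of `Φ`: the pointwise supremum
of all convex functions lying below `Φ`. -/
noncomputable def convexEnvelope {N : ℕ}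
    (Φ : EuclideanSpace ℝ (Fin N) → ℝ) (A : EuclideanSpace ℝ (Fin N)) : ℝ :=
  sSup {y : ℝ | ∃ g : EuclideanSpace ℝ (Fin N) → ℝ,
    ConvexOn ℝ Set.univ g ∧ (∀ z, g z ≤ Φ z) ∧ y = g A}

/-!
`Φ**` is a convex minorant of `Φ` that touches it on the contact set, so at a contact point
the function `Φ - Φ** ≥ 0` attains its minimum `0` and the two gradients agree there.
The gradient of a differentiable convex function is a monotone operator: adding the gradient
inequalities `⟪∇f(A₁), A₂ - A₁⟫ ≤ f A₂ - f A₁` and `⟪∇f(A₂), A₁ - A₂⟫ ≤ f A₁ - f A₂` gives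
`0 ≤ ⟪∇f(A₁) - ∇f(A₂), A₁ - A₂⟫`.
-/

open Set Filter Topology
open scoped InnerProductSpace

section Gradient

variable {E : Type*} [NormedAddCommGroup E] [InnerProductSpace ℝ E] [CompleteSpace E]
  {f g : E → ℝ} {a b x y : E}

theorem ConvexOn.inner_gradient_le_sub (hf : ConvexOn ℝ univ f) (ha : HasGradientAt f a x)
    (y : E) : ⟪a, y - x⟫_ℝ ≤ f y - f x := by
  let ℓ : ℝ →ᵃ[ℝ] E := AffineMap.lineMap x y
  have hline : HasDerivAt (f ∘ ℓ) ⟪a, y - x⟫_ℝ 0 := by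
    have hfx : HasFDerivAt f (InnerProductSpace.toDual ℝ E a) (ℓ 0) := by
      simpa [ℓ] using ha.hasFDerivAt
    simpa using hfx.comp_hasDerivAt 0 AffineMap.hasDerivAt_lineMap
  simpa [slope_def_field, ℓ] using (hf.comp_affineMap ℓ).le_slope_of_hasDerivAt
    (mem_univ 0) (mem_univ 1) zero_lt_one hline

theorem ConvexOn.inner_gradient_sub_nonneg (hf : ConvexOn ℝ univ f) (ha : HasGradientAt f a x)
    (hb : HasGradientAt f b y) : 0 ≤ ⟪a - b, x - y⟫_ℝ := by
  have hxy := hf.inner_gradient_le_sub hb x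
  have hyx := hf.inner_gradient_le_sub ha y
  rw [← neg_sub x y, inner_neg_right] at hyx
  rw [inner_sub_left]
  linarith

theorem HasGradientAt.eq_of_eventually_le_of_eq (hf : HasGradientAt f a x)
    (hg : HasGradientAt g b x) (hle : ∀ᶠ z in 𝓝 x, f z ≤ g z) (heq : f x = g x) : a = b := by
  have hmin : IsLocalMin (fun z => g z - f z) x := by
    filter_upwards [hle] with z hz
    rw [heq, sub_self]
    exact sub_nonneg.mpr hz
  have hzero := hmin.hasFDerivAt_eq_zero (hg.hasFDerivAt.sub hf.hasFDerivAt)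
  exact ((InnerProductSpace.toDual ℝ E).injective (sub_eq_zero.mp hzero)).symm

end Gradient

section ConvexEnvelope

variable {N : ℕ} {Φ g : EuclideanSpace ℝ (Fin N) → ℝ}

theorem le_convexEnvelope (hg : ConvexOn ℝ univ g) (hgΦ : ∀ z, g z ≤ Φ z)
    (A : EuclideanSpace ℝ (Fin N)) :
    g A ≤ convexEnvelope Φ A :=
  le_csSup ⟨Φ A, by rintro _ ⟨h, -, hhΦ, rfl⟩; exact hhΦ A⟩ ⟨g, hg, hgΦ, rfl⟩

theorem convexEnvelope_le (hg : ConvexOn ℝ univ g) (hgΦ : ∀ z, g z ≤ Φ z)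
    (A : EuclideanSpace ℝ (Fin N)) :
    convexEnvelope Φ A ≤ Φ A :=
  csSup_le ⟨g A, g, hg, hgΦ, rfl⟩ (by rintro _ ⟨h, -, hhΦ, rfl⟩; exact hhΦ A)

theorem convexOn_convexEnvelope (hg : ConvexOn ℝ univ g) (hgΦ : ∀ z, g z ≤ Φ z) :
    ConvexOn ℝ univ (convexEnvelope Φ) := by
  refine ⟨convex_univ, fun x _ y _ s t hs ht hst => ?_⟩
  refine csSup_le ⟨g _, g, hg, hgΦ, rfl⟩ ?_
  rintro _ ⟨h, hh, hhΦ, rfl⟩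
  calc h (s • x + t • y) ≤ s * h x + t * h y := hh.2 (mem_univ x) (mem_univ y) hs ht hst
    _ ≤ s * convexEnvelope Φ x + t * convexEnvelope Φ y := by
      gcongr <;> exact le_convexEnvelope hh hhΦ _

end ConvexEnvelope

theorem gradient_monotone_on_contact_set_general {N : ℕ} (lam : ℝ)
    (Φ : EuclideanSpace ℝ (Fin N) → ℝ)
    (hlow : ∀ A, max (lam * ‖A‖ - 1) 0 ≤ Φ A)
    (q p : EuclideanSpace ℝ (Fin N) → EuclideanSpace ℝ (Fin N))
    (hq : ∀ x, HasGradientAt Φ (q x) x)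
    (hp : ∀ x, HasGradientAt (convexEnvelope Φ) (p x) x) :
    ∀ A₁ ∈ {A : EuclideanSpace ℝ (Fin N) | convexEnvelope Φ A = Φ A},
      ∀ A₂ ∈ {A : EuclideanSpace ℝ (Fin N) | convexEnvelope Φ A = Φ A},
        (0 : ℝ) ≤ inner ℝ (q A₁ - q A₂) (A₁ - A₂) := by
  -- `Φ**` needs some convex minorant of `Φ`: without one it is `sSup ∅ = 0`, not below `Φ`.
  have hzero : ConvexOn ℝ univ (fun _ : EuclideanSpace ℝ (Fin N) => (0 : ℝ)) :=
    convexOn_const 0 convex_univ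
  have hzeroΦ : ∀ z, (0 : ℝ) ≤ Φ z := fun z => (le_max_right _ _).trans (hlow z)
  have hpq : ∀ A, convexEnvelope Φ A = Φ A → p A = q A := fun A hA =>
    (hp A).eq_of_eventually_le_of_eq (hq A)
      (Eventually.of_forall (convexEnvelope_le hzero hzeroΦ)) hA
  intro A₁ hA₁ A₂ hA₂
  rw [← hpq A₁ hA₁, ← hpq A₂ hA₂]
  exact (convexOn_convexEnvelope hzero hzeroΦ).inner_gradient_sub_nonneg (hp A₁) (hp A₂)

/-- On the contact set `B = {Φ** = Φ}`, the gradient `q = ∇Φ` is monotone: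
`(q(A₁) − q(A₂)) · (A₁ − A₂) ≥ 0` for all `A₁, A₂ ∈ B`. -/
theorem gradient_monotone_on_contact_set {N : ℕ} (lam Lam : ℝ)
    (hlam : 0 < lam) (hlL : lam ≤ Lam)
    (Φ : EuclideanSpace ℝ (Fin N) → ℝ)
    (hlow : ∀ A, max (lam * ‖A‖ - 1) 0 ≤ Φ A)
    (hup : ∀ A, Φ A ≤ Lam * ‖A‖ + 1)
    (q p : EuclideanSpace ℝ (Fin N) → EuclideanSpace ℝ (Fin N))
    (hq : ∀ x, HasGradientAt Φ (q x) x)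
    (hp : ∀ x, HasGradientAt (convexEnvelope Φ) (p x) x) :
    ∀ A₁ ∈ {A : EuclideanSpace ℝ (Fin N) | convexEnvelope Φ A = Φ A},
      ∀ A₂ ∈ {A : EuclideanSpace ℝ (Fin N) | convexEnvelope Φ A = Φ A},
        (0 : ℝ) ≤ inner ℝ (q A₁ - q A₂) (A₁ - A₂) :=
  gradient_monotone_on_contact_set_general lam Φ hlow q p hq hp
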